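/- arXiv:2107.06611 — 3 statements merged into one kernel-verified Lean document; each statement's English description precedes it below -/
import Mathlib

section
/- Let n ≥ 2 and let Ω ⊂ ℝⁿ be an open ball (a bounded open Lipschitz domain). Let s, p, K : ℝⁿ×ℝⁿ → ℝ be symmetric measurable functions satisfying the standing bounds, and assume in addition that either p⁺ − 1 < n p⁻/(n − s⁻p⁻) or s⁻p⁻ ≥ n. If g ∈ 𝕎^{s(·,·),p(·,·)}(Ω) ∩ L^∞(Ω; L^{p(·,·)−1}_{s(·,·)p(·,·)}(ℝⁿ)), then the unique minimizer u ∈ 𝕎^{s(·,·),p(·,·)}(Ω), with u = g a.e. in ℝⁿ\Ω, of the energy ℰ(v;Ω) := ∬_{𝒞_Ω} (1/p(x,y)) |v(x)−v(y)|^{p(x,y)} K(x,y) dy dx also belongs to L^∞(Ω; L^{p(·,·)−1}_{s(·,·)p(·,·)}(ℝⁿ)). -/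
open MeasureTheory Metric Set Real
open scoped ENNReal NNReal

noncomputable section

abbrev Rn (n : ℕ) := EuclideanSpace ℝ (Fin n)

/-- The variable-power modular `ρ_{s,p}(v;U)` (valued in `ℝ≥0∞`). -/
def modular (n : ℕ) (s p : Rn n → Rn n → ℝ) (v : Rn n → ℝ) (U : Set (Rn n)) : ℝ≥0∞ :=
  ∫⁻ x in U, ∫⁻ y in U,
    ENNReal.ofReal (|v x - v y| ^ p x y / ‖x - y‖ ^ ((n : ℝ) + s x y * p x y))

/-- The cross set `𝒞_Ω = (ℝⁿ×ℝⁿ) \ (Ωᶜ×Ωᶜ)`. -/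
def crossSet (n : ℕ) (Ω : Set (Rn n)) : Set (Rn n × Rn n) :=
  Set.univ \ (Ωᶜ ×ˢ Ωᶜ)

/-- The modular over the cross set `𝒞_Ω`. -/
def crossModular (n : ℕ) (Ω : Set (Rn n)) (s p : Rn n → Rn n → ℝ) (v : Rn n → ℝ) : ℝ≥0∞ :=
  ∫⁻ z in crossSet n Ω,
    ENNReal.ofReal (|v z.1 - v z.2| ^ p z.1 z.2 / ‖z.1 - z.2‖ ^ ((n : ℝ) + s z.1 z.2 * p z.1 z.2))

/-- Infimum of a two-variable function over `U × U`. -/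
def infOn (n : ℕ) (p : Rn n → Rn n → ℝ) (U : Set (Rn n)) : ℝ := sInf (Set.image2 p U U)

/-- Supremum of a two-variable function over `U × U`. -/
def supOn (n : ℕ) (p : Rn n → Rn n → ℝ) (U : Set (Rn n)) : ℝ := sSup (Set.image2 p U U)

/-- Membership in `𝕎^{s(·,·),p(·,·)}(Ω)`. -/
def MemW (n : ℕ) (Ω : Set (Rn n)) (s p : Rn n → Rn n → ℝ) (v : Rn n → ℝ) : Prop :=
  Measurable v ∧
  (∫⁻ x in Ω, ENNReal.ofReal (|v x| ^ infOn n p Ω)) < ⊤ ∧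
  crossModular n Ω s p v < ⊤

/-- The tail seminorm `[v]_{L^∞(U;L^{p-1}_{sp}(ℝⁿ))}`. -/
def tailSemi (n : ℕ) (s p : Rn n → Rn n → ℝ) (v : Rn n → ℝ) (U : Set (Rn n)) : ℝ≥0∞ :=
  essSup (fun x => ∫⁻ y,
    ENNReal.ofReal (|v y| ^ (p x y - 1) / (1 + ‖y‖) ^ ((n : ℝ) + s x y * p x y)))
    (volume.restrict U)

/-- Membership in the tail space `L^∞(Ω;L^{p(·,·)-1}_{s(·,·)p(·,·)}(ℝⁿ))`. -/
def MemTail (n : ℕ) (Ω : Set (Rn n)) (s p : Rn n → Rn n → ℝ) (v : Rn n → ℝ) : Prop :=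
  Measurable v ∧ tailSemi n s p v Ω < ⊤

/-- The nonlocal tail `T(v;x₀,r,ρ)`. -/
def tailT (n : ℕ) (s p : Rn n → Rn n → ℝ) (v : Rn n → ℝ) (x₀ : Rn n) (r ρ : ℝ) : ℝ≥0∞ :=
  ⨆ x ∈ ball x₀ ρ, ∫⁻ y in (ball x₀ r)ᶜ,
    ENNReal.ofReal (|v y| ^ (p x y - 1) / ‖y - x₀‖ ^ ((n : ℝ) + s x y * p x y))

/-- `u` is a weak solution of `𝓛_K u = 0` in `Ω`. -/
def IsWeakSol (n : ℕ) (Ω : Set (Rn n)) (s p K : Rn n → Rn n → ℝ) (u : Rn n → ℝ) : Prop :=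
  MemW n Ω s p u ∧
  ∀ φ : Rn n → ℝ, MemW n Ω s p φ → (∀ᵐ x ∂(volume.restrict Ωᶜ), φ x = 0) →
    (∫ z in crossSet n Ω,
      |u z.1 - u z.2| ^ (p z.1 z.2 - 2) * (u z.1 - u z.2) * (φ z.1 - φ z.2) * K z.1 z.2) = 0

/-- The oscillation `ω_p(r)` of `p` near the diagonal of `Ω`. -/
def oscDiag (n : ℕ) (Ω : Set (Rn n)) (p : Rn n → Rn n → ℝ) (r : ℝ) : ℝ :=
  sSup { d | ∃ z x₁ x₂ y₁ y₂ : Rn n, ball z r ⊆ Ω ∧ x₁ ∈ ball z r ∧ x₂ ∈ ball z r ∧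
    y₁ ∈ ball z r ∧ y₂ ∈ ball z r ∧ d = |p x₁ y₁ - p x₂ y₂| }

/-- Standing assumptions on the variable powers `s` and `p`. -/
structure StandingSP (n : ℕ) (s p : Rn n → Rn n → ℝ) (sm sp pm pp : ℝ) : Prop where
  s_symm : ∀ x y, s x y = s y x
  p_symm : ∀ x y, p x y = p y x
  s_meas : Measurable fun z : Rn n × Rn n => s z.1 z.2
  p_meas : Measurable fun z : Rn n × Rn n => p z.1 z.2
  sm_pos : 0 < sm
  sp_lt_one : sp < 1
  s_bounds : ∀ x y, sm ≤ s x y ∧ s x y ≤ sp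
  pm_gt_one : 1 < pm
  p_bounds : ∀ x y, pm ≤ p x y ∧ p x y ≤ pp

/-- Standing assumptions on the kernel `K`. -/
structure StandingKernel (n : ℕ) (s p K : Rn n → Rn n → ℝ) (Λ : ℝ) : Prop where
  K_symm : ∀ x y, K x y = K y x
  K_meas : Measurable fun z : Rn n × Rn n => K z.1 z.2
  lam_gt_one : 1 < Λ
  K_bounds : ∀ᵐ z ∂(volume : Measure (Rn n × Rn n)),
    Λ⁻¹ / ‖z.1 - z.2‖ ^ ((n : ℝ) + s z.1 z.2 * p z.1 z.2) ≤ K z.1 z.2 ∧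
    K z.1 z.2 ≤ Λ / ‖z.1 - z.2‖ ^ ((n : ℝ) + s z.1 z.2 * p z.1 z.2)

/-- The energy `ℰ(v;Ω)`. -/
def energyE (n : ℕ) (Ω : Set (Rn n)) (p K : Rn n → Rn n → ℝ) (v : Rn n → ℝ) : ℝ≥0∞ :=
  ∫⁻ z in crossSet n Ω,
    ENNReal.ofReal ((1 / p z.1 z.2) * |v z.1 - v z.2| ^ p z.1 z.2 * K z.1 z.2)

/-- `u` minimizes the energy among competitors agreeing with `g` a.e. outside `Ω`. -/
def IsMinimizer (n : ℕ) (Ω : Set (Rn n)) (s p K : Rn n → Rn n → ℝ) (g u : Rn n → ℝ) : Prop :=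
  MemW n Ω s p u ∧ (∀ᵐ x ∂(volume.restrict Ωᶜ), u x = g x) ∧
  ∀ v : Rn n → ℝ, MemW n Ω s p v → (∀ᵐ x ∂(volume.restrict Ωᶜ), v x = g x) →
    energyE n Ω p K u ≤ energyE n Ω p K v

/-!
Outside the ball `u = g`, and inside it `|u|^{p-1} ≤ 1 + |u|^{p⁺-1}`, so the tail of `u` is
controlled by that of `g` once `u ∈ L^{p⁺-1}(Ω)`. That is a fractional Sobolev embedding, proved
from the finiteness of the Gagliardo modular of `u` on `Ω × Ω` by a De Giorgi iteration: choosing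
`σ ≤ s⁻p⁻` with `σ < n` and `p⁺ - 1 < n p⁻ / (n - σ)` (possible by the hypothesis on the exponents),
the measures `a_k` of the level sets `{|u| ≥ 2^k}` satisfy
`a_{k+1} ≤ C 2^{-k p⁻} a_k^{σ/n}` once they are small, which forces `a_k ≲ 2^{-θ k}` for every
`θ < n p⁻ / (n - σ)`; summing over dyadic layers gives `∫_Ω |u|^{p⁺-1} < ∞`.
-/

open Filter Topology

namespace FractionalTail

theorem exists_le_mul_two_rpow_of_le_rpow {a : ℕ → ℝ} {C q β θ : ℝ} {K : ℕ}
    (ha : ∀ k, 0 ≤ a k) (hC : 0 ≤ C) (hβ₀ : 0 ≤ β) (hβ₁ : β < 1) (hθ : θ * (1 - β) ≤ q)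
    (hrec : ∀ k ≥ K, a (k + 1) ≤ C * 2 ^ (-q * k) * a k ^ β) :
    ∃ M, ∀ k ≥ K, a k ≤ M * 2 ^ (-θ * k) := by
  set M := max ((C * 2 ^ θ) ^ (1 - β)⁻¹) (max 1 (a K * 2 ^ (θ * K)))
  have hM : 0 < M := one_pos.trans_le ((le_max_left _ _).trans (le_max_right _ _))
  have hCM : C * 2 ^ θ ≤ M ^ (1 - β) :=
    calc C * 2 ^ θ = ((C * 2 ^ θ) ^ (1 - β)⁻¹) ^ (1 - β) := by
          rw [← rpow_mul (by positivity), inv_mul_cancel₀ (by linarith), rpow_one]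
      _ ≤ M ^ (1 - β) := rpow_le_rpow (by positivity) (le_max_left _ _) (by linarith)
  refine ⟨M, fun k hk => ?_⟩
  induction k, hk using Nat.le_induction with
  | base =>
    calc a K = a K * 2 ^ (θ * K) * 2 ^ (-θ * K) := by
          rw [mul_assoc, ← rpow_add two_pos]; simp
      _ ≤ M * 2 ^ (-θ * K) := by
          gcongr; exact (le_max_right _ _).trans (le_max_right _ _)
  | succ k hk ih =>
    have hpow : (2 : ℝ) ^ (-q * k + -θ * k * β) ≤ 2 ^ θ * 2 ^ (-θ * (k + 1)) := by
      rw [← rpow_add two_pos]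
      apply rpow_le_rpow_of_exponent_le one_le_two
      nlinarith [(Nat.cast_nonneg k : (0 : ℝ) ≤ k)]
    push_cast
    calc a (k + 1) ≤ C * 2 ^ (-q * k) * (M * 2 ^ (-θ * k)) ^ β :=
          (hrec k hk).trans (by gcongr; exact ha k)
      _ = C * M ^ β * 2 ^ (-q * k + -θ * k * β) := by
          rw [mul_rpow hM.le (by positivity), ← rpow_mul zero_le_two, rpow_add two_pos]; ring
      _ ≤ C * M ^ β * (2 ^ θ * 2 ^ (-θ * (k + 1))) := by gcongr
      _ = C * 2 ^ θ * M ^ β * 2 ^ (-θ * (k + 1)) := by ring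
      _ ≤ M ^ (1 - β) * M ^ β * 2 ^ (-θ * (k + 1)) := by gcongr
      _ = M * 2 ^ (-θ * (k + 1)) := by rw [← rpow_add hM]; simp

theorem exists_ball_subset_ball_inter_ball {E : Type*} [NormedAddCommGroup E] [NormedSpace ℝ E]
    {z x : E} {R ρ : ℝ} (hx : x ∈ ball z R) (hρ : 0 < ρ) (hρR : ρ ≤ R) :
    ∃ c, ball c (ρ / 2) ⊆ ball z R ∩ ball x ρ := by
  have hR : 0 < R := hρ.trans_le hρR
  have hx' : dist x z < R := hx
  set t := ρ / (2 * R)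
  have ht₀ : 0 ≤ t := by positivity
  have ht₁ : t ≤ 1 / 2 := by rw [div_le_iff₀ (by positivity)]; linarith
  have htR : t * R = ρ / 2 := by simp only [t]; field_simp
  refine ⟨x + t • (z - x), fun w hw => ⟨?_, ?_⟩⟩
  · have : dist (x + t • (z - x)) z = (1 - t) * dist x z := by
      rw [dist_eq_norm, dist_eq_norm, show x + t • (z - x) - z = (1 - t) • (x - z) by module,
        norm_smul, Real.norm_of_nonneg (by linarith)]
    have : (1 - t) * dist x z ≤ R - ρ / 2 := by nlinarith [dist_nonneg (x := x) (y := z)]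
    exact (dist_triangle w _ z).trans_lt (by rw [mem_ball] at hw; linarith)
  · have : dist (x + t • (z - x)) x = t * dist x z := by
      rw [dist_eq_norm, add_sub_cancel_left, norm_smul, Real.norm_of_nonneg ht₀, dist_eq_norm,
        norm_sub_rev]
    have : t * dist x z ≤ ρ / 2 := by nlinarith [dist_nonneg (x := x) (y := z)]
    exact (dist_triangle w _ x).trans_lt (by rw [mem_ball] at hw; linarith)

theorem ofReal_mul_volume_ball_le_volume_inter {n : ℕ} (hn : n ≠ 0) {z x : Rn n} {R ρ : ℝ}
    (hx : x ∈ ball z R) (hρ : 0 < ρ) (hρR : ρ ≤ R) :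
    ENNReal.ofReal ((ρ / 2) ^ n) * volume (ball (0 : Rn n) 1) ≤ volume (ball z R ∩ ball x ρ) := by
  have : NeZero n := ⟨hn⟩
  obtain ⟨c, hc⟩ := exists_ball_subset_ball_inter_ball hx hρ hρR
  calc ENNReal.ofReal ((ρ / 2) ^ n) * volume (ball (0 : Rn n) 1) = volume (ball c (ρ / 2)) := by
        rw [Measure.addHaar_ball volume c (by positivity), finrank_euclideanSpace_fin]
    _ ≤ _ := measure_mono hc

theorem two_mul_ofReal_le_volume_ball_inter_ball {n : ℕ} (hn : n ≠ 0) {κ a ρ : ℝ}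
    (hκc : 2 ^ (n + 1) ≤ κ * (volume (ball (0 : Rn n) 1)).toReal) (ha : 0 ≤ a) (hρ : 0 < ρ)
    (hρn : ρ ^ n = κ * a) {z x : Rn n} {R : ℝ} (hx : x ∈ ball z R) (hρR : ρ ≤ R) :
    2 * ENNReal.ofReal a ≤ volume (ball z R ∩ ball x ρ) := by
  set c := (volume (ball (0 : Rn n) 1)).toReal
  calc 2 * ENNReal.ofReal a = ENNReal.ofReal (2 * a) := by
        rw [ENNReal.ofReal_mul zero_le_two, ENNReal.ofReal_ofNat]
    _ ≤ ENNReal.ofReal ((ρ / 2) ^ n * c) := by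
        apply ENNReal.ofReal_le_ofReal
        rw [div_pow, hρn, div_mul_eq_mul_div, le_div_iff₀ (by positivity)]
        calc 2 * a * 2 ^ n = 2 ^ (n + 1) * a := by ring
          _ ≤ κ * c * a := by gcongr
          _ = κ * a * c := by ring
    _ = ENNReal.ofReal ((ρ / 2) ^ n) * volume (ball (0 : Rn n) 1) := by
        rw [ENNReal.ofReal_mul (by positivity), ENNReal.ofReal_toReal measure_ball_lt_top.ne]
    _ ≤ _ := ofReal_mul_volume_ball_le_volume_inter hn hx hρ hρR

theorem rpow_div_rpow_le_rpow_div_rpow {l a q p d ρ N₁ N₂ : ℝ} (hl : 1 ≤ l) (hla : l ≤ a)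
    (hq : 0 ≤ q) (hqp : q ≤ p) (hd : 0 < d) (hdρ : d ≤ ρ) (hρ : ρ ≤ 1) (hN₁ : 0 ≤ N₁)
    (hN : N₁ ≤ N₂) : l ^ q / ρ ^ N₁ ≤ a ^ p / d ^ N₂ := by
  apply div_le_div₀ (rpow_nonneg (by linarith) _)
  · exact (rpow_le_rpow_of_exponent_le hl hqp).trans (rpow_le_rpow (by linarith) hla (by linarith))
  · positivity
  · exact (rpow_le_rpow_of_exponent_ge hd (hdρ.trans hρ) hN).trans (rpow_le_rpow hd.le hdρ hN₁)

def gagliardo (n : ℕ) (s p : Rn n → Rn n → ℝ) (v : Rn n → ℝ) (x y : Rn n) : ℝ≥0∞ :=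
  ENNReal.ofReal (|v x - v y| ^ p x y / ‖x - y‖ ^ ((n : ℝ) + s x y * p x y))

theorem measurable_gagliardo {n : ℕ} {s p : Rn n → Rn n → ℝ} {v : Rn n → ℝ}
    (hs : Measurable fun z : Rn n × Rn n => s z.1 z.2)
    (hp : Measurable fun z : Rn n × Rn n => p z.1 z.2) (hv : Measurable v) :
    Measurable fun z : Rn n × Rn n => gagliardo n s p v z.1 z.2 := by
  unfold gagliardo
  fun_prop

theorem modular_le_crossModular {n : ℕ} {Ω : Set (Rn n)} {s p : Rn n → Rn n → ℝ} {v : Rn n → ℝ}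
    (hs : Measurable fun z : Rn n × Rn n => s z.1 z.2)
    (hp : Measurable fun z : Rn n × Rn n => p z.1 z.2) (hv : Measurable v) :
    modular n s p v Ω ≤ crossModular n Ω s p v := by
  calc modular n s p v Ω = ∫⁻ z in Ω ×ˢ Ω, gagliardo n s p v z.1 z.2 := by
        rw [Measure.volume_eq_prod, ← Measure.prod_restrict,
          lintegral_prod _ (measurable_gagliardo hs hp hv).aemeasurable]
        rfl
    _ ≤ crossModular n Ω s p v :=
        lintegral_mono_set fun z hz => ⟨mem_univ _, fun h => h.1 hz.1⟩

theorem ofReal_mul_volume_le_lintegral_gagliardo {n : ℕ} {s p : Rn n → Rn n → ℝ}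
    {v : Rn n → ℝ} (hv : Measurable v) {q σ l ρ : ℝ} (hq : 0 ≤ q) (hqp : ∀ x y, q ≤ p x y)
    (hσ : 0 ≤ σ) (hσsp : ∀ x y, σ ≤ s x y * p x y) (hl : 1 ≤ l) (hρ₁ : ρ ≤ 1)
    {S : Set (Rn n)} (hS : MeasurableSet S) {x : Rn n} (hx : 2 * l ≤ |v x|) :
    ENNReal.ofReal (l ^ q / ρ ^ ((n : ℝ) + σ)) * volume (S ∩ ball x ρ ∩ {y | |v y| < l})
      ≤ ∫⁻ y in S, gagliardo n s p v x y := by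
  have hT : MeasurableSet (S ∩ ball x ρ ∩ {y | |v y| < l}) :=
    (hS.inter measurableSet_ball).inter (measurableSet_lt hv.abs measurable_const)
  rw [← setLIntegral_const]
  refine (setLIntegral_mono' hT fun y ⟨⟨_, hy⟩, hvy⟩ => ?_).trans
    (lintegral_mono_set inter_subset_left |>.trans (lintegral_mono_set inter_subset_left))
  have hlv : l ≤ |v x - v y| := by
    have : |v y| < l := hvy
    linarith [abs_sub_abs_le_abs_sub (v x) (v y)]
  have hxy : 0 < ‖x - y‖ := norm_sub_pos_iff.2 fun h => by
    rw [h, sub_self, abs_zero] at hlv; linarith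
  refine ENNReal.ofReal_le_ofReal (rpow_div_rpow_le_rpow_div_rpow hl hlv hq (hqp x y) hxy ?_ hρ₁
    (by positivity) (by linarith [hσsp x y]))
  rw [← dist_eq_norm, dist_comm]; exact (mem_ball.1 hy).le

theorem ofReal_mul_volume_mul_volume_le_modular {n : ℕ} {s p : Rn n → Rn n → ℝ}
    {v : Rn n → ℝ} (hv : Measurable v) {q σ l ρ : ℝ} (hq : 0 ≤ q) (hqp : ∀ x y, q ≤ p x y)
    (hσ : 0 ≤ σ) (hσsp : ∀ x y, σ ≤ s x y * p x y) (hl : 1 ≤ l) (hρ₁ : ρ ≤ 1)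
    {B : Set (Rn n)} (hB : MeasurableSet B) (hBfin : volume B ≠ ⊤)
    (hdense : ∀ x ∈ B, 2 * volume (B ∩ {y | l ≤ |v y|}) ≤ volume (B ∩ ball x ρ)) :
    ENNReal.ofReal (l ^ q / ρ ^ ((n : ℝ) + σ)) * volume (B ∩ {y | l ≤ |v y|})
      * volume (B ∩ {x | 2 * l ≤ |v x|}) ≤ modular n s p v B := by
  set m := volume (B ∩ {y | l ≤ |v y|})
  have hm : m ≠ ⊤ := ne_top_of_le_ne_top hBfin (measure_mono inter_subset_left)
  have hlow : ∀ x ∈ B, m ≤ volume (B ∩ ball x ρ ∩ {y | |v y| < l}) := fun x hx => by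
    have hcover : B ∩ ball x ρ ⊆ (B ∩ ball x ρ ∩ {y | |v y| < l}) ∪ (B ∩ {y | l ≤ |v y|}) :=
      fun y hy => (lt_or_ge |v y| l).imp (fun h => ⟨hy, h⟩) (fun h => ⟨hy.1, h⟩)
    have := (hdense x hx).trans ((measure_mono hcover).trans (measure_union_le _ _))
    rw [two_mul] at this
    exact (ENNReal.add_le_add_iff_right hm).1 this
  have hT : MeasurableSet (B ∩ {x | 2 * l ≤ |v x|}) :=
    hB.inter (measurableSet_le measurable_const hv.abs)
  rw [← setLIntegral_const]
  calc ∫⁻ _ in B ∩ {x | 2 * l ≤ |v x|}, ENNReal.ofReal (l ^ q / ρ ^ ((n : ℝ) + σ)) * m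
      ≤ ∫⁻ x in B ∩ {x | 2 * l ≤ |v x|}, ∫⁻ y in B, gagliardo n s p v x y :=
        setLIntegral_mono' hT fun x ⟨hxB, hx⟩ =>
          (mul_le_mul_right (hlow x hxB) _).trans
            (ofReal_mul_volume_le_lintegral_gagliardo hv hq hqp hσ hσsp hl hρ₁ hB hx)
    _ ≤ modular n s p v B := lintegral_mono_set inter_subset_left

def levelMeasure {α : Type*} [MeasurableSpace α] (μ : Measure α) (B : Set α) (v : α → ℝ)
    (k : ℕ) : ℝ :=
  (μ (B ∩ {x | (2 : ℝ) ^ k ≤ |v x|})).toReal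

theorem antitone_inter_levelSet {α : Type*} (B : Set α) (v : α → ℝ) :
    Antitone fun k : ℕ => B ∩ {x | (2 : ℝ) ^ k ≤ |v x|} :=
  fun _ _ hkm => inter_subset_inter_right _ fun _ hx =>
    mem_ofPred.2 <| (pow_le_pow_right₀ one_le_two hkm).trans hx

theorem levelMeasure_antitone {α : Type*} [MeasurableSpace α] {μ : Measure α} {B : Set α}
    (hB : μ B ≠ ⊤) (v : α → ℝ) : Antitone (levelMeasure μ B v) := fun _ _ hkm =>
  ENNReal.toReal_mono (ne_top_of_le_ne_top hB (measure_mono inter_subset_left))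
    (measure_mono (antitone_inter_levelSet B v hkm))

theorem tendsto_levelMeasure {α : Type*} [MeasurableSpace α] {μ : Measure α} {B : Set α}
    (hBm : MeasurableSet B) (hB : μ B ≠ ⊤) {v : α → ℝ} (hv : Measurable v) :
    Tendsto (levelMeasure μ B v) atTop (𝓝 0) := by
  have hempty : ⋂ k : ℕ, B ∩ {x | (2 : ℝ) ^ k ≤ |v x|} = ∅ :=
    eq_empty_of_forall_notMem fun x hx => by
      obtain ⟨k, hk⟩ := pow_unbounded_of_one_lt |v x| one_lt_two
      exact hk.not_ge (mem_iInter.1 hx k).2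
  have := tendsto_measure_iInter_atTop (μ := μ)
    (fun k => (hBm.inter (measurableSet_le measurable_const hv.abs)).nullMeasurableSet)
    (antitone_inter_levelSet B v) ⟨0, ne_top_of_le_ne_top hB (measure_mono inter_subset_left)⟩
  rw [hempty, measure_empty] at this
  exact (ENNReal.tendsto_toReal ENNReal.zero_ne_top).comp this

/-- With `a_k = |B(z₀, R) ∩ {|v| ≥ 2^k}|` and `ρ = (κ a_k)^{1/n}`, the set `B(z₀, R) ∩ B(x, ρ)` has
measure at least `2 a_k`, so for `x` in `{|v| ≥ 2^{k+1}}` at least `a_k` of it lies in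
`{|v| < 2^k}`, where the Gagliardo integrand is `≥ 2^{kq} / ρ^{n+σ}`. -/
theorem levelMeasure_succ_le {n : ℕ} (hn : n ≠ 0) {s p : Rn n → Rn n → ℝ} {v : Rn n → ℝ}
    (hv : Measurable v) {q σ κ : ℝ} (hq : 0 ≤ q) (hqp : ∀ x y, q ≤ p x y) (hσ : 0 ≤ σ)
    (hσsp : ∀ x y, σ ≤ s x y * p x y) (hκ : 0 < κ)
    (hκc : 2 ^ (n + 1) ≤ κ * (volume (ball (0 : Rn n) 1)).toReal) {z₀ : Rn n} {R : ℝ}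
    (hR : 0 < R) (hmod : modular n s p v (ball z₀ R) ≠ ⊤) {k : ℕ}
    (hsmall : levelMeasure volume (ball z₀ R) v k ≤ min 1 R ^ n / κ) :
    levelMeasure volume (ball z₀ R) v (k + 1) ≤ (modular n s p v (ball z₀ R)).toReal
      * κ ^ (1 + σ / n) * 2 ^ (-q * k) * levelMeasure volume (ball z₀ R) v k ^ (σ / n) := by
  set B := ball z₀ R
  set a := levelMeasure volume B v k
  set D := (modular n s p v B).toReal
  have hBfin : volume B ≠ ⊤ := measure_ball_lt_top.ne
  have hT : volume (B ∩ {x | (2 : ℝ) ^ k ≤ |v x|}) = ENNReal.ofReal a :=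
    (ENNReal.ofReal_toReal (ne_top_of_le_ne_top hBfin (measure_mono inter_subset_left))).symm
  rcases (show 0 ≤ a from ENNReal.toReal_nonneg).eq_or_lt with ha | ha
  · calc _ ≤ a := levelMeasure_antitone hBfin v k.le_succ
      _ = 0 := ha.symm
      _ ≤ _ := by positivity
  set ρ := (κ * a) ^ (n : ℝ)⁻¹
  have hρ : 0 < ρ := by positivity
  have hρn : ρ ^ n = κ * a := rpow_inv_natCast_pow (by positivity) hn
  have hρR : ρ ≤ min 1 R := by
    rw [← pow_le_pow_iff_left₀ hρ.le (by positivity) hn, hρn, mul_comm, ← le_div_iff₀ hκ]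
    exact hsmall
  have hdense : ∀ x ∈ B, 2 * volume (B ∩ {y | (2 : ℝ) ^ k ≤ |v y|}) ≤ volume (B ∩ ball x ρ) :=
    fun x hx => hT ▸ two_mul_ofReal_le_volume_ball_inter_ball hn hκc ha.le hρ hρn hx
      (hρR.trans (min_le_right _ _))
  have hmain := ofReal_mul_volume_mul_volume_le_modular hv hq hqp hσ hσsp (one_le_pow₀ one_le_two)
    (hρR.trans (min_le_left _ _)) measurableSet_ball hBfin hdense
  rw [← pow_succ'] at hmain
  have hreal := ENNReal.toReal_mono hmod hmain
  rw [ENNReal.toReal_mul, ENNReal.toReal_mul, ENNReal.toReal_ofReal (by positivity)] at hreal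
  change (2 ^ k) ^ q / ρ ^ ((n : ℝ) + σ) * a * levelMeasure volume B v (k + 1) ≤ D at hreal
  have hρσ : ρ ^ ((n : ℝ) + σ) = κ ^ (1 + σ / n) * a ^ (σ / n) * a := by
    have : (n : ℝ) ≠ 0 := Nat.cast_ne_zero.2 hn
    rw [← rpow_mul (by positivity), mul_rpow hκ.le ha.le, mul_assoc, ← rpow_add_one ha.ne',
      show (n : ℝ)⁻¹ * (n + σ) = 1 + σ / n by field_simp, add_comm (σ / n) 1]
  have h2k : ((2 : ℝ) ^ k) ^ q = 2 ^ (q * k) := by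
    rw [← rpow_natCast, ← rpow_mul zero_le_two, mul_comm]
  rw [hρσ, h2k, div_mul_eq_mul_div, div_mul_eq_mul_div, div_le_iff₀ (by positivity)] at hreal
  refine le_of_mul_le_mul_right ?_ (by positivity : (0 : ℝ) < 2 ^ (q * k) * a)
  calc levelMeasure volume B v (k + 1) * (2 ^ (q * k) * a)
      = 2 ^ (q * k) * a * levelMeasure volume B v (k + 1) := by ring
    _ ≤ D * (κ ^ (1 + σ / n) * a ^ (σ / n) * a) := hreal
    _ = _ := by rw [neg_mul, rpow_neg zero_le_two]; field_simp

theorem rpow_le_add_tsum_indicator {α : Type*} {v : α → ℝ} {r : ℝ} (hr : 0 ≤ r) (K : ℕ) (x : α)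
    {B : Set α} (hx : x ∈ B) :
    ENNReal.ofReal (|v x| ^ r) ≤ ENNReal.ofReal (((2 : ℝ) ^ K) ^ r) + ∑' j : ℕ,
      (B ∩ {y | (2 : ℝ) ^ (K + j) ≤ |v y|}).indicator
        (fun _ => ENNReal.ofReal (((2 : ℝ) ^ (K + j + 1)) ^ r)) x := by
  rcases lt_or_ge |v x| (2 ^ K) with hlt | hge
  · exact le_add_right (ENNReal.ofReal_le_ofReal (rpow_le_rpow (abs_nonneg _) hlt.le hr))
  obtain ⟨m, hm, hm'⟩ := exists_nat_pow_near ((one_le_pow₀ one_le_two).trans hge) one_lt_two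
  have hKm : K ≤ m := by
    by_contra! h
    exact (hm'.trans_le (pow_le_pow_right₀ one_le_two h)).not_ge hge
  refine le_add_left (le_trans ?_ (ENNReal.le_tsum (m - K)))
  rw [Nat.add_sub_cancel' hKm,
    indicator_of_mem (show x ∈ B ∩ {y | (2 : ℝ) ^ m ≤ |v y|} from ⟨hx, hm⟩)]
  exact ENNReal.ofReal_le_ofReal (rpow_le_rpow (abs_nonneg _) hm'.le hr)

theorem setLIntegral_rpow_le_tsum {α : Type*} [MeasurableSpace α] {μ : Measure α} {B : Set α}
    (hB : MeasurableSet B) {v : α → ℝ} (hv : Measurable v) {r : ℝ} (hr : 0 ≤ r) (K : ℕ) :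
    ∫⁻ x in B, ENNReal.ofReal (|v x| ^ r) ∂μ ≤ ENNReal.ofReal (((2 : ℝ) ^ K) ^ r) * μ B
      + ∑' j : ℕ, ENNReal.ofReal (((2 : ℝ) ^ (K + j + 1)) ^ r)
          * μ (B ∩ {y | (2 : ℝ) ^ (K + j) ≤ |v y|}) := by
  have hT : ∀ j : ℕ, MeasurableSet (B ∩ {y | (2 : ℝ) ^ (K + j) ≤ |v y|}) :=
    fun j => hB.inter (measurableSet_le measurable_const hv.abs)
  refine (setLIntegral_mono' hB fun x hx => rpow_le_add_tsum_indicator hr K x hx).trans_eq ?_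
  rw [lintegral_add_left measurable_const, setLIntegral_const,
    lintegral_tsum fun j => (measurable_const.indicator (hT j)).aemeasurable]
  congr 1
  refine tsum_congr fun j => ?_
  rw [lintegral_indicator_const (hT j), Measure.restrict_apply (hT j),
    inter_eq_left.2 inter_subset_left]

theorem setLIntegral_rpow_lt_top_of_levelMeasure_le {α : Type*} [MeasurableSpace α]
    {μ : Measure α} {B : Set α} (hB : MeasurableSet B) (hBfin : μ B ≠ ⊤) {v : α → ℝ}
    (hv : Measurable v) {r θ M : ℝ} {K : ℕ} (hr : 0 ≤ r) (hrθ : r < θ)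
    (hdecay : ∀ k ≥ K, levelMeasure μ B v k ≤ M * 2 ^ (-θ * k)) :
    ∫⁻ x in B, ENNReal.ofReal (|v x| ^ r) ∂μ < ⊤ := by
  set C := M * 2 ^ ((K + 1) * r - θ * K)
  have hterm : ∀ j : ℕ, ENNReal.ofReal (((2 : ℝ) ^ (K + j + 1)) ^ r)
      * μ (B ∩ {y | (2 : ℝ) ^ (K + j) ≤ |v y|})
      ≤ ENNReal.ofReal C * ENNReal.ofReal (2 ^ (r - θ)) ^ j := by
    intro j
    rw [← ENNReal.ofReal_toReal (ne_top_of_le_ne_top hBfin (measure_mono inter_subset_left)),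
      ← ENNReal.ofReal_pow (by positivity), ← ENNReal.ofReal_mul (by positivity),
      ← ENNReal.ofReal_mul' (by positivity)]
    apply ENNReal.ofReal_le_ofReal
    calc _ ≤ ((2 : ℝ) ^ (K + j + 1)) ^ r * (M * 2 ^ (-θ * (K + j : ℕ))) := by
          gcongr; exact hdecay (K + j) (Nat.le_add_right _ _)
      _ = C * (2 ^ (r - θ)) ^ j := by
          simp only [C, ← rpow_natCast, ← rpow_mul zero_le_two]
          rw [mul_left_comm, mul_assoc, ← rpow_add two_pos, ← rpow_add two_pos]
          push_cast
          ring_nf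
  have hratio : ENNReal.ofReal (2 ^ (r - θ)) < 1 := by
    rw [ENNReal.ofReal_lt_one]; exact rpow_lt_one_of_one_lt_of_neg one_lt_two (by linarith)
  refine (setLIntegral_rpow_le_tsum hB hv hr K).trans_lt ?_
  refine (add_le_add_right (ENNReal.tsum_le_tsum hterm) _).trans_lt ?_
  rw [ENNReal.tsum_mul_left, ENNReal.tsum_geometric]
  exact ENNReal.add_lt_top.2 ⟨ENNReal.mul_lt_top ENNReal.ofReal_lt_top hBfin.lt_top,
    ENNReal.mul_lt_top ENNReal.ofReal_lt_top
      (ENNReal.inv_ne_top.2 (tsub_pos_of_lt hratio).ne').lt_top⟩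

theorem setLIntegral_rpow_lt_top_of_modular_ne_top {n : ℕ} (hn : n ≠ 0)
    {s p : Rn n → Rn n → ℝ} {v : Rn n → ℝ} (hv : Measurable v) {q σ r : ℝ}
    (hqp : ∀ x y, q ≤ p x y) (hσ : 0 < σ) (hσn : σ < n) (hσsp : ∀ x y, σ ≤ s x y * p x y)
    (hr : 0 ≤ r) (hrq : r < n * q / (n - σ)) {z₀ : Rn n} {R : ℝ} (hR : 0 < R)
    (hmod : modular n s p v (ball z₀ R) ≠ ⊤) :
    ∫⁻ x in ball z₀ R, ENNReal.ofReal (|v x| ^ r) < ⊤ := by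
  have hnσ : 0 < n - σ := by linarith
  have hn₀ : (0 : ℝ) < n := by linarith
  have hq : 0 ≤ q := by
    by_contra! h
    have : n * q / (n - σ) < 0 := div_neg_of_neg_of_pos (mul_neg_of_pos_of_neg hn₀ h) hnσ
    linarith
  set c := (volume (ball (0 : Rn n) 1)).toReal
  have hc : 0 < c := ENNReal.toReal_pos (measure_ball_pos _ _ one_pos).ne' measure_ball_lt_top.ne
  set κ : ℝ := 2 ^ (n + 1) / c
  have hκ : 0 < κ := by positivity
  have hκc : 2 ^ (n + 1) ≤ κ * c := by rw [div_mul_cancel₀ _ hc.ne']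
  have hβ₁ : σ / n < 1 := (div_lt_one hn₀).2 hσn
  obtain ⟨θ, hrθ, hθq⟩ := exists_between hrq
  have hθ : θ * (1 - σ / n) ≤ q := by
    calc θ * (1 - σ / n) ≤ n * q / (n - σ) * (1 - σ / n) := by gcongr
      _ = q := by field_simp
  have hB : volume (ball z₀ R) ≠ ⊤ := measure_ball_lt_top.ne
  have hsmall : 0 < min 1 R ^ n / κ := by positivity
  obtain ⟨K, hK⟩ := eventually_atTop.1 <|
    (tendsto_levelMeasure measurableSet_ball hB hv).eventually_le_const hsmall
  obtain ⟨M, hM⟩ := exists_le_mul_two_rpow_of_le_rpow (a := levelMeasure volume (ball z₀ R) v)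
    (K := K) (fun _ => ENNReal.toReal_nonneg) (by positivity) (by positivity) hβ₁ hθ
    fun k hk => levelMeasure_succ_le hn hv hq hqp hσ.le hσsp hκ hκc hR hmod (hK k hk)
  exact setLIntegral_rpow_lt_top_of_levelMeasure_le measurableSet_ball hB hv hr hrθ hM

theorem rpow_le_one_add_rpow {a e r : ℝ} (ha : 0 ≤ a) (he : 0 ≤ e) (her : e ≤ r) :
    a ^ e ≤ 1 + a ^ r := by
  rcases le_total a 1 with h | h
  · linarith [rpow_le_one ha h he, rpow_nonneg ha r]
  · linarith [rpow_le_rpow_of_exponent_le h her]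

theorem tailSemi_le {n : ℕ} {s p : Rn n → Rn n → ℝ} {u g : Rn n → ℝ} {B : Set (Rn n)}
    (hB : MeasurableSet B) {r : ℝ} (hp : ∀ x y, 1 ≤ p x y ∧ p x y ≤ r + 1)
    (hsp : ∀ x y, 0 ≤ s x y * p x y) (hug : ∀ᵐ y ∂volume.restrict Bᶜ, u y = g y) :
    tailSemi n s p u B
      ≤ volume B + (∫⁻ y in B, ENNReal.ofReal (|u y| ^ r)) + tailSemi n s p g B := by
  unfold tailSemi
  refine essSup_le_of_ae_le _ ((ae_le_essSup (f := fun x => ∫⁻ y,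
    ENNReal.ofReal (|g y| ^ (p x y - 1) / (1 + ‖y‖) ^ ((n : ℝ) + s x y * p x y)))).mono
      fun x hx => ?_)
  dsimp only
  rw [← lintegral_add_compl _ hB]
  refine add_le_add ?_ (le_trans (le_of_eq (setLIntegral_congr_fun_ae hB.compl ?_))
    ((setLIntegral_le_lintegral _ _).trans hx))
  · rw [← setLIntegral_one, ← lintegral_add_left measurable_const]
    refine lintegral_mono fun y => ?_
    rw [← ENNReal.ofReal_one, ← ENNReal.ofReal_add zero_le_one (by positivity)]
    refine ENNReal.ofReal_le_ofReal ((div_le_self (by positivity) ?_).trans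
      (rpow_le_one_add_rpow (abs_nonneg _) (by linarith [hp x y]) (by linarith [hp x y])))
    exact one_le_rpow (by linarith [norm_nonneg y]) (by linarith [hsp x y])
  · filter_upwards [ae_restrict_iff' hB.compl |>.1 hug] with y hy hyB
    rw [hy hyB]

theorem exists_exponent_lt_dim {N a b r : ℝ} (hN₀ : 0 < N) (ha : 0 < a) (hb : 0 < b) (hr : 0 < r)
    (h : r < N * b / (N - a * b) ∨ N ≤ a * b) :
    ∃ σ, 0 < σ ∧ σ < N ∧ σ ≤ a * b ∧ r < N * b / (N - σ) := by
  rcases lt_or_ge (a * b) N with hN | hN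
  · exact ⟨a * b, by positivity, hN, le_rfl, h.resolve_right hN.not_ge⟩
  · have hσN : N * r / (r + b) < N := by rw [div_lt_iff₀ (by positivity)]; nlinarith
    refine ⟨N * r / (r + b), by positivity, hσN, hσN.le.trans hN, ?_⟩
    rw [show N - N * r / (r + b) = N * b / (r + b) by field_simp; ring,
      div_div_eq_mul_div, mul_div_cancel_left₀ _ (by positivity : N * b ≠ 0)]
    linarith

end FractionalTail

open FractionalTail

theorem minimizer_mem_tail_general
    (n : ℕ) (hn : 2 ≤ n) (z₀ : Rn n) (R : ℝ) (hR : 0 < R)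
    (s p K : Rn n → Rn n → ℝ) (sm sps pm pp : ℝ)
    (hsp : StandingSP n s p sm sps pm pp)
    (hexp : pp - 1 < n * pm / (n - sm * pm) ∨ (n : ℝ) ≤ sm * pm)
    (g : Rn n → ℝ)
    (hgT : MemTail n (ball z₀ R) s p g)
    (u : Rn n → ℝ) (hu : IsMinimizer n (ball z₀ R) s p K g u) :
    MemTail n (ball z₀ R) s p u := by
  obtain ⟨⟨hu_meas, -, hu_mod⟩, hug, -⟩ := hu
  have hp : ∀ x y, pm ≤ p x y ∧ p x y ≤ pp := hsp.p_bounds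
  have hs : ∀ x y, sm ≤ s x y := fun x y => (hsp.s_bounds x y).1
  have hpm := hsp.pm_gt_one
  have hpp : pm ≤ pp := (hp z₀ z₀).1.trans (hp z₀ z₀).2
  obtain ⟨σ, hσ, hσn, hσsm, hrσ⟩ := exists_exponent_lt_dim (by positivity) hsp.sm_pos (by linarith)
    (by linarith : 0 < pp - 1) hexp
  have hσsp : ∀ x y, σ ≤ s x y * p x y := fun x y =>
    hσsm.trans (mul_le_mul (hs x y) (hp x y).1 (by linarith) (hsp.sm_pos.le.trans (hs x y)))
  have hint := setLIntegral_rpow_lt_top_of_modular_ne_top (by omega) hu_meas (fun x y => (hp x y).1)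
    hσ hσn hσsp (by linarith) hrσ hR
    ((modular_le_crossModular hsp.s_meas hsp.p_meas hu_meas).trans_lt hu_mod).ne
  have htail := tailSemi_le (r := pp - 1) measurableSet_ball
    (fun x y => ⟨by linarith [hp x y], by linarith [hp x y]⟩)
    (fun x y => hσ.le.trans (hσsp x y)) hug
  exact ⟨hu_meas, htail.trans_lt (ENNReal.add_lt_top.2
    ⟨ENNReal.add_lt_top.2 ⟨measure_ball_lt_top, hint⟩, hgT.2⟩)⟩

/-- **Tail-space membership of the minimizer** (Theorem `thmexistence`, second part), for `Ω` an
open ball. If `p⁺ − 1 < n p⁻/(n − s⁻p⁻)` or `s⁻p⁻ ≥ n`, and the boundary datum `g` belongs to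
`𝕎^{s,p}(Ω) ∩ L^∞(Ω;L^{p-1}_{sp}(ℝⁿ))`, then any minimizer `u` of the energy with `u = g` a.e.
in `ℝⁿ \ Ω` belongs to the tail space `L^∞(Ω;L^{p(·,·)−1}_{s(·,·)p(·,·)}(ℝⁿ))`. -/
theorem minimizer_mem_tail
    (n : ℕ) (hn : 2 ≤ n) (z₀ : Rn n) (R : ℝ) (hR : 0 < R)
    (s p K : Rn n → Rn n → ℝ) (sm sps pm pp Λ : ℝ)
    (hsp : StandingSP n s p sm sps pm pp) (hK : StandingKernel n s p K Λ)
    (hexp : pp - 1 < n * pm / (n - sm * pm) ∨ (n : ℝ) ≤ sm * pm)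
    (g : Rn n → ℝ) (hgW : MemW n (ball z₀ R) s p g)
    (hgT : MemTail n (ball z₀ R) s p g)
    (u : Rn n → ℝ) (hu : IsMinimizer n (ball z₀ R) s p K g u) :
    MemTail n (ball z₀ R) s p u :=
  minimizer_mem_tail_general n hn z₀ R hR s p K sm sps pm pp hsp hexp g hgT u hu
end
end

section
/- Let p > 1 and a ≥ b ≥ 0. Then for every ε > 0, a^p − b^p ≤ ε a^p + ((p−1)/ε)^{p−1} (a−b)^p; consequently, there is a constant c > 0 depending only on p such that for every ε > 0, a^p − b^p ≤ ε b^p + (ε + c ε^{1−p}) (a−b)^p. -/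
open MeasureTheory Metric Set Real
open scoped ENNReal NNReal

noncomputable section

/-!
The tangent-line inequality for the convex function `t ↦ t ^ p` gives
`a ^ p - b ^ p ≤ p a ^ (p - 1) (a - b)`, and Young's inequality with exponents `p / (p - 1)`
and `p`, weighted by `ε`, splits the
right-hand side into `ε a ^ p + ((p - 1) / ε) ^ (p - 1) (a - b) ^ p`.
For the second inequality, apply the first with `ε / 2 ^ (p - 1)` and use
`a ^ p ≤ 2 ^ (p - 1) (b ^ p + (a - b) ^ p)`.
-/

namespace Real

lemma rpow_sub_rpow_le_mul_rpow_sub_one_mul {p a b : ℝ} (hp : 1 ≤ p) (hb : 0 ≤ b) (hba : b ≤ a) :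
    a ^ p - b ^ p ≤ p * a ^ (p - 1) * (a - b) := by
  rcases hba.eq_or_lt with rfl | hba
  · simp
  have hslope : slope (fun t : ℝ ↦ t ^ p) b a ≤ p * a ^ (p - 1) :=
    (convexOn_rpow hp).slope_le_of_hasDerivAt hb (hb.trans hba.le) hba
      (hasDerivAt_rpow_const (Or.inr hp))
  rwa [slope_def_field, div_le_iff₀ (sub_pos.2 hba)] at hslope

lemma rpow_add_le_mul_rpow_add_rpow {p a b : ℝ} (ha : 0 ≤ a) (hb : 0 ≤ b) (hp : 1 ≤ p) :
    (a + b) ^ p ≤ 2 ^ (p - 1) * (a ^ p + b ^ p) := by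
  lift a to NNReal using ha
  lift b to NNReal using hb
  exact_mod_cast NNReal.rpow_add_le_mul_rpow_add_rpow a b hp

-- The constant is sharp: equality holds at `x = (p - 1) y / ε`.
lemma mul_rpow_sub_one_mul_le {p x y ε : ℝ} (hp : 1 < p) (hx : 0 ≤ x) (hy : 0 ≤ y) (hε : 0 < ε) :
    p * x ^ (p - 1) * y ≤ ε * x ^ p + ((p - 1) / ε) ^ (p - 1) * y ^ p := by
  have hp0 : 0 < p := by linarith
  have hp1 : 0 < p - 1 := by linarith
  set c := ε / (p - 1) with hc
  have hc0 : 0 < c := by positivity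
  -- weighted AM-GM of `c x ^ p` and `c⁻¹ ^ (p - 1) y ^ p` with weights `(p - 1) / p` and `1 / p`
  have hamgm := geom_mean_le_arith_mean2_weighted (w₁ := (p - 1) / p) (w₂ := 1 / p)
    (p₁ := c * x ^ p) (p₂ := c⁻¹ ^ (p - 1) * y ^ p) (by positivity) (by positivity)
    (by positivity) (by positivity) (by field_simp; ring)
  have hgeom :
      (c * x ^ p) ^ ((p - 1) / p) * (c⁻¹ ^ (p - 1) * y ^ p) ^ (1 / p) = x ^ (p - 1) * y := by
    rw [mul_rpow hc0.le (by positivity), mul_rpow (by positivity) (by positivity),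
      ← rpow_mul hx, ← rpow_mul (by positivity), ← rpow_mul hy,
      mul_div_cancel₀ _ hp0.ne', mul_one_div_cancel hp0.ne', rpow_one, mul_one_div,
      inv_rpow hc0.le]
    field_simp
  rw [hgeom] at hamgm
  have hconst : c⁻¹ = (p - 1) / ε := by rw [hc, inv_div]
  calc p * x ^ (p - 1) * y = p * (x ^ (p - 1) * y) := by ring
    _ ≤ p * ((p - 1) / p * (c * x ^ p) + 1 / p * (c⁻¹ ^ (p - 1) * y ^ p)) := by gcongr
    _ = ε * x ^ p + ((p - 1) / ε) ^ (p - 1) * y ^ p := by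
      rw [← hconst, hc]; field_simp

end Real

lemma rpow_sub_rpow_le_eps_mul_left_rpow {p a b ε : ℝ} (hp : 1 < p) (hb : 0 ≤ b) (hba : b ≤ a)
    (hε : 0 < ε) :
    a ^ p - b ^ p ≤ ε * a ^ p + ((p - 1) / ε) ^ (p - 1) * (a - b) ^ p :=
  (rpow_sub_rpow_le_mul_rpow_sub_one_mul hp.le hb hba).trans
    (mul_rpow_sub_one_mul_le hp (hb.trans hba) (sub_nonneg.2 hba) hε)

lemma rpow_sub_rpow_le_eps_mul_right_rpow {p a b ε : ℝ} (hp : 1 < p) (hb : 0 ≤ b) (hba : b ≤ a)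
    (hε : 0 < ε) :
    a ^ p - b ^ p ≤
      ε * b ^ p + (ε + ((p - 1) * 2 ^ (p - 1)) ^ (p - 1) * ε ^ (1 - p)) * (a - b) ^ p := by
  have h2 : (0 : ℝ) < 2 ^ (p - 1) := by positivity
  have hsplit : a ^ p ≤ 2 ^ (p - 1) * (b ^ p + (a - b) ^ p) := by
    simpa using rpow_add_le_mul_rpow_add_rpow hb (sub_nonneg.2 hba) hp.le
  have hconst : ((p - 1) / (ε / 2 ^ (p - 1))) ^ (p - 1) =
      ((p - 1) * 2 ^ (p - 1)) ^ (p - 1) * ε ^ (1 - p) := by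
    rw [div_div_eq_mul_div, div_eq_mul_inv,
      mul_rpow (mul_nonneg (by linarith) h2.le) (inv_nonneg.2 hε.le),
      inv_rpow hε.le, ← rpow_neg hε.le, neg_sub]
  calc a ^ p - b ^ p
      ≤ ε / 2 ^ (p - 1) * a ^ p + ((p - 1) / (ε / 2 ^ (p - 1))) ^ (p - 1) * (a - b) ^ p :=
        rpow_sub_rpow_le_eps_mul_left_rpow hp hb hba (by positivity)
    _ ≤ ε / 2 ^ (p - 1) * (2 ^ (p - 1) * (b ^ p + (a - b) ^ p)) +
          ((p - 1) * 2 ^ (p - 1)) ^ (p - 1) * ε ^ (1 - p) * (a - b) ^ p := by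
        rw [hconst]; gcongr
    _ = ε * b ^ p + (ε + ((p - 1) * 2 ^ (p - 1)) ^ (p - 1) * ε ^ (1 - p)) * (a - b) ^ p := by
        field_simp; ring

/-- **Lemma `lemineq1` (elementary power inequality).** -/
theorem power_inequality (pe : ℝ) (hpe : 1 < pe) :
    (∀ a b ε : ℝ, 0 ≤ b → b ≤ a → 0 < ε →
      a ^ pe - b ^ pe ≤ ε * a ^ pe + ((pe - 1) / ε) ^ (pe - 1) * (a - b) ^ pe) ∧
    ∃ c : ℝ, 0 < c ∧ ∀ a b ε : ℝ, 0 ≤ b → b ≤ a → 0 < ε →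
      a ^ pe - b ^ pe ≤ ε * b ^ pe + (ε + c * ε ^ (1 - pe)) * (a - b) ^ pe := by
  have hpe1 : 0 < pe - 1 := by linarith
  exact ⟨fun _ _ _ hb hba hε ↦ rpow_sub_rpow_le_eps_mul_left_rpow hpe hb hba hε,
    ((pe - 1) * 2 ^ (pe - 1)) ^ (pe - 1), by positivity,
    fun _ _ _ hb hba hε ↦ rpow_sub_rpow_le_eps_mul_right_rpow hpe hb hba hε⟩
end
end

section
/- Let s, p : ℝⁿ×ℝⁿ → ℝ be symmetric measurable functions satisfying the standing bounds, and let Ω ⊂ ℝⁿ be open and bounded. (i) If v ∈ L^γ(ℝⁿ) for some γ ≥ p⁺ − 1, then v ∈ L^∞(Ω; L^{p(·,·)−1}_{s(·,·)p(·,·)}(ℝⁿ)). (ii) If v ∈ L^{p⁺−1}(B_M(0)) for some M > 0 and v is essentially bounded on ℝⁿ \ B_M(0), then v ∈ L^∞(Ω; L^{p(·,·)−1}_{s(·,·)p(·,·)}(ℝⁿ)). In particular every v ∈ L^∞(ℝⁿ) belongs to L^∞(Ω; L^{p(·,·)−1}_{s(·,·)p(·,·)}(ℝⁿ)) for every such Ω.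 -/
open MeasureTheory Metric Set Real
open scoped ENNReal NNReal

noncomputable section

/-!
Since `p - 1 ≤ p⁺ - 1 ≤ γ` and `s p ≥ s⁻ p⁻`, the tail integrand at `x` is bounded, independently
of `x`, by `(1 + |v y|^γ) (1 + |y|)^{-(n + s⁻p⁻)}`. The weight `(1 + |y|)^{-(n + s⁻p⁻)}` is at most
`1` and integrable, so this bound is integrable as soon as `|v|^γ` is integrable on a measurable
set `S` and `v` is essentially bounded off `S`. The three claims are the cases `S = ℝⁿ`,
`S = B_M(0)` and `S = ∅`.
-/

theorem Real.rpow_le_one_add_rpow {a t γ : ℝ} (ha : 0 ≤ a) (ht : 0 ≤ t) (htγ : t ≤ γ) :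
    a ^ t ≤ 1 + a ^ γ := by
  rcases le_or_gt a 1 with ha1 | ha1
  · linarith [Real.rpow_le_one ha ha1 ht, Real.rpow_nonneg ha γ]
  · linarith [Real.rpow_le_rpow_of_exponent_le ha1.le htγ]

section WeightedIntegral

variable {α E : Type*} [MeasurableSpace α] [NormedAddCommGroup E] {μ : Measure α}

theorem lintegral_one_add_enorm_rpow_mul_lt_top {v : α → E} {w : α → ℝ≥0∞} {γ : ℝ}
    {S : Set α} (hγ : 0 < γ) (hS : MeasurableSet S) (hw : AEMeasurable w μ)
    (hw_le_one : ∀ y, w y ≤ 1) (hw_fin : ∫⁻ y, w y ∂μ < ⊤)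
    (hvS : MemLp v (ENNReal.ofReal γ) (μ.restrict S))
    (hvSc : eLpNorm v ⊤ (μ.restrict Sᶜ) < ⊤) :
    ∫⁻ y, (1 + ‖v y‖ₑ ^ γ) * w y ∂μ < ⊤ := by
  have hS_part : ∫⁻ y in S, ‖v y‖ₑ ^ γ * w y ∂μ < ⊤ := by
    have hv_fin := lintegral_rpow_enorm_lt_top_of_eLpNorm_lt_top
      (by simpa using hγ) ENNReal.ofReal_ne_top hvS.eLpNorm_lt_top
    rw [ENNReal.toReal_ofReal hγ.le] at hv_fin
    refine lt_of_le_of_lt (lintegral_mono fun y => ?_) hv_fin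
    simpa using mul_le_mul_right (hw_le_one y) (‖v y‖ₑ ^ γ)
  have hSc_part : ∫⁻ y in Sᶜ, ‖v y‖ₑ ^ γ * w y ∂μ < ⊤ := by
    set C := eLpNorm v ⊤ (μ.restrict Sᶜ)
    calc ∫⁻ y in Sᶜ, ‖v y‖ₑ ^ γ * w y ∂μ ≤ ∫⁻ y in Sᶜ, C ^ γ * w y ∂μ := by
          refine lintegral_mono_ae ?_
          filter_upwards [ae_le_eLpNormEssSup (f := v) (μ := μ.restrict Sᶜ)] with y hy
          gcongr
          exact hy.trans_eq eLpNorm_exponent_top.symm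
      _ ≤ C ^ γ * ∫⁻ y, w y ∂μ := by
          rw [lintegral_const_mul'' _ hw.restrict]
          exact mul_le_mul_right (setLIntegral_le_lintegral _ _) _
      _ < ⊤ := ENNReal.mul_lt_top (ENNReal.rpow_lt_top_of_nonneg hγ.le hvSc.ne) hw_fin
  simp_rw [add_mul, one_mul]
  rw [lintegral_add_left' hw]
  refine ENNReal.add_lt_top.2 ⟨hw_fin, ?_⟩
  rw [← lintegral_add_compl _ hS]
  exact ENNReal.add_lt_top.2 ⟨hS_part, hSc_part⟩

end WeightedIntegral

theorem ofReal_one_add_norm_rpow_neg_le_one {F : Type*} [NormedAddCommGroup F] (y : F)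
    {r : ℝ} (hr : 0 ≤ r) : ENNReal.ofReal ((1 + ‖y‖) ^ (-r)) ≤ 1 :=
  ENNReal.ofReal_le_one.2 <|
    Real.rpow_le_one_of_one_le_of_nonpos (le_add_of_nonneg_right (norm_nonneg y)) (by linarith)

namespace StandingSP

variable {n : ℕ} {s p : Rn n → Rn n → ℝ} {sm sps pm pp : ℝ}

theorem one_lt_pp (hsp : StandingSP n s p sm sps pm pp) : 1 < pp :=
  hsp.pm_gt_one.trans_le ((hsp.p_bounds 0 0).1.trans (hsp.p_bounds 0 0).2)

theorem sm_mul_pm_pos (hsp : StandingSP n s p sm sps pm pp) : 0 < sm * pm :=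
  mul_pos hsp.sm_pos (zero_lt_one.trans hsp.pm_gt_one)

theorem tail_integrand_le (hsp : StandingSP n s p sm sps pm pp) (v : Rn n → ℝ) {γ : ℝ}
    (hγ : pp - 1 ≤ γ) (x y : Rn n) :
    ENNReal.ofReal (|v y| ^ (p x y - 1) / (1 + ‖y‖) ^ ((n : ℝ) + s x y * p x y)) ≤
      (1 + ‖v y‖ₑ ^ γ) * ENNReal.ofReal ((1 + ‖y‖) ^ (-((n : ℝ) + sm * pm))) := by
  obtain ⟨hs_lo, -⟩ := hsp.s_bounds x y
  obtain ⟨hp_lo, hp_hi⟩ := hsp.p_bounds x y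
  have hb : 1 ≤ 1 + ‖y‖ := le_add_of_nonneg_right (norm_nonneg y)
  have hpow : |v y| ^ (p x y - 1) ≤ 1 + |v y| ^ γ :=
    Real.rpow_le_one_add_rpow (abs_nonneg _) (by linarith [hsp.pm_gt_one]) (by linarith)
  have hdecay : ((1 + ‖y‖) ^ ((n : ℝ) + s x y * p x y))⁻¹ ≤ (1 + ‖y‖) ^ (-((n : ℝ) + sm * pm)) := by
    have hsp_lo : sm * pm ≤ s x y * p x y :=
      mul_le_mul hs_lo hp_lo (by linarith [hsp.pm_gt_one]) (by linarith [hsp.sm_pos])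
    rw [← Real.rpow_neg (by positivity)]
    exact Real.rpow_le_rpow_of_exponent_le hb (by linarith)
  calc ENNReal.ofReal (|v y| ^ (p x y - 1) / (1 + ‖y‖) ^ ((n : ℝ) + s x y * p x y))
      ≤ ENNReal.ofReal ((1 + |v y| ^ γ) * (1 + ‖y‖) ^ (-((n : ℝ) + sm * pm))) := by
        rw [div_eq_mul_inv]
        exact ENNReal.ofReal_le_ofReal (mul_le_mul hpow hdecay (by positivity) (by positivity))
    _ = (1 + ‖v y‖ₑ ^ γ) * ENNReal.ofReal ((1 + ‖y‖) ^ (-((n : ℝ) + sm * pm))) := by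
        rw [ENNReal.ofReal_mul (by positivity), ENNReal.ofReal_add zero_le_one (by positivity),
          ENNReal.ofReal_one, Real.enorm_eq_ofReal_abs,
          ENNReal.ofReal_rpow_of_nonneg (abs_nonneg _) (by linarith [hsp.one_lt_pp])]

theorem memTail_of_memLp_restrict_of_eLpNorm_compl_lt_top (hsp : StandingSP n s p sm sps pm pp)
    (Ω : Set (Rn n)) {v : Rn n → ℝ} (hv : Measurable v) {γ : ℝ} (hγ : pp - 1 ≤ γ)
    {S : Set (Rn n)} (hS : MeasurableSet S) (hvS : MemLp v (ENNReal.ofReal γ) (volume.restrict S))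
    (hvSc : eLpNorm v ⊤ (volume.restrict Sᶜ) < ⊤) : MemTail n Ω s p v := by
  have hr : (Module.finrank ℝ (Rn n) : ℝ) < n + sm * pm := by
    rw [finrank_euclideanSpace_fin]
    exact lt_add_of_pos_right _ hsp.sm_mul_pm_pos
  have hdom := lintegral_one_add_enorm_rpow_mul_lt_top (by linarith [hsp.one_lt_pp]) hS
    (by fun_prop) (fun y => ofReal_one_add_norm_rpow_neg_le_one y (by linarith))
    (finite_integral_one_add_norm hr) hvS hvSc
  refine ⟨hv, lt_of_le_of_lt (essSup_le_of_ae_le _ (Filter.Eventually.of_forall fun x => ?_)) hdom⟩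
  exact lintegral_mono (hsp.tail_integrand_le v hγ x)

end StandingSP

theorem tail_space_examples_general
    (n : ℕ) (Ω : Set (Rn n))
    (s p : Rn n → Rn n → ℝ) (sm sps pm pp : ℝ)
    (hsp : StandingSP n s p sm sps pm pp) :
    (∀ (v : Rn n → ℝ) (γ : ℝ), Measurable v → pp - 1 ≤ γ →
      MemLp v (ENNReal.ofReal γ) (volume : Measure (Rn n)) → MemTail n Ω s p v) ∧
    (∀ (v : Rn n → ℝ) (M : ℝ), Measurable v → 0 < M →
      MemLp v (ENNReal.ofReal (pp - 1)) (volume.restrict (ball (0 : Rn n) M)) →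
      eLpNorm v ⊤ (volume.restrict (ball (0 : Rn n) M)ᶜ) < ⊤ → MemTail n Ω s p v) ∧
    (∀ v : Rn n → ℝ, Measurable v → eLpNorm v ⊤ (volume : Measure (Rn n)) < ⊤ →
      MemTail n Ω s p v) := by
  refine ⟨fun v γ hv hγ hvγ => ?_, fun v M hv _ hvM hvMc => ?_, fun v hv hv_bdd => ?_⟩
  · exact hsp.memTail_of_memLp_restrict_of_eLpNorm_compl_lt_top Ω hv hγ MeasurableSet.univ
      (by rwa [Measure.restrict_univ]) (by simp)
  · exact hsp.memTail_of_memLp_restrict_of_eLpNorm_compl_lt_top Ω hv le_rfl measurableSet_ball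
      hvM hvMc
  · exact hsp.memTail_of_memLp_restrict_of_eLpNorm_compl_lt_top Ω hv le_rfl
      MeasurableSet.empty (by simp) (by rwa [compl_empty, Measure.restrict_univ])

/-- **Remark `rmkL` (examples of tail-space functions).** (i) `v ∈ L^γ(ℝⁿ)` with `γ ≥ p⁺−1`
lies in the tail space; (ii) `v ∈ L^{p⁺−1}(B_M(0))` that is essentially bounded outside
`B_M(0)` lies in the tail space; in particular every essentially bounded `v` does. -/
theorem tail_space_examples
    (n : ℕ) (Ω : Set (Rn n)) (hΩo : IsOpen Ω) (hΩb : Bornology.IsBounded Ω)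
    (s p : Rn n → Rn n → ℝ) (sm sps pm pp : ℝ)
    (hsp : StandingSP n s p sm sps pm pp) :
    (∀ (v : Rn n → ℝ) (γ : ℝ), Measurable v → pp - 1 ≤ γ →
      MemLp v (ENNReal.ofReal γ) (volume : Measure (Rn n)) → MemTail n Ω s p v) ∧
    (∀ (v : Rn n → ℝ) (M : ℝ), Measurable v → 0 < M →
      MemLp v (ENNReal.ofReal (pp - 1)) (volume.restrict (ball (0 : Rn n) M)) →
      eLpNorm v ⊤ (volume.restrict (ball (0 : Rn n) M)ᶜ) < ⊤ → MemTail n Ω s p v) ∧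
    (∀ v : Rn n → ℝ, Measurable v → eLpNorm v ⊤ (volume : Measure (Rn n)) < ⊤ →
      MemTail n Ω s p v) :=
  tail_space_examples_general n Ω s p sm sps pm pp hsp
end
end
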